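/- Let χ be a primitive character mod 16 with associated odd integer c (where χ(5) = e^{2πi c/4}). Then G(χ,2^4) = 2^2 · χ(−c) · e^{−2πi c/16}. -/

import Mathlib

/-! The units mod 16 are `±5 ^ k`, so with `ζ = e^{2πi/16}` the Gauss sum is a polynomial
in `ζ`, `χ 5 = ζ ^ (4 * c)` and `χ (-1)`; for `c = 1` and `c = 3` the claimed identity
follows from `ζ ^ 8 = -1`. -/

open Complex

/-- The Gauss sum `G(χ,q) = ∑_{x mod q} χ(x) e^{2πi x/q}`. -/
noncomputable def Gsum {q : ℕ} [NeZero q] (χ : DirichletCharacter ℂ q) : ℂ :=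
  ∑ x : ZMod q, χ x * Complex.exp (2 * Real.pi * Complex.I * (x.val : ℂ) / q)

open Finset

lemma DirichletCharacter.sum_range_sixteen {R : Type*} [CommRing R]
    (χ : DirichletCharacter R 16) (f : ℕ → R) :
    ∑ n ∈ range 16, χ n * f n =
      f 1 + χ 5 * f 5 + χ 5 ^ 2 * f 9 + χ 5 ^ 3 * f 13 +
        χ (-1) * (f 15 + χ 5 * f 11 + χ 5 ^ 2 * f 7 + χ 5 ^ 3 * f 3) := by
  have hnonunit : ∀ a : ZMod 16, ¬IsUnit a → χ a = 0 := fun a ha => χ.map_nonunit ha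
  have hpow : ∀ (a : ZMod 16) (k : ℕ), a = 5 ^ k → χ a = χ 5 ^ k := by
    rintro a k rfl; exact map_pow χ 5 k
  have hneg : ∀ (a : ZMod 16) (k : ℕ), a = -1 * 5 ^ k → χ a = χ (-1) * χ 5 ^ k := by
    rintro a k rfl; rw [map_mul, map_pow]
  simp only [sum_range_succ, sum_range_zero, Nat.cast_ofNat, Nat.cast_zero, Nat.cast_one]
  rw [hnonunit 0 (by decide), hnonunit 2 (by decide), hnonunit 4 (by decide),
    hnonunit 6 (by decide), hnonunit 8 (by decide), hnonunit 10 (by decide),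
    hnonunit 12 (by decide), hnonunit 14 (by decide),
    map_one, hpow 9 2 (by decide), hpow 13 3 (by decide), hneg 15 0 (by decide),
    hneg 11 1 (by decide), hneg 7 2 (by decide), hneg 3 3 (by decide)]
  ring

lemma exp_two_pi_I_mul_div (n k : ℕ) :
    exp (2 * Real.pi * I * k / n) = exp (2 * Real.pi * I / n) ^ k := by
  rw [← exp_nat_mul]; ring_nf

lemma exp_neg_two_pi_I_mul_div {n k : ℕ} (hn : n ≠ 0) (hk : k ≤ n) :
    exp (-(2 * Real.pi * I * k) / n) = exp (2 * Real.pi * I / n) ^ (n - k) := by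
  have : 2 * Real.pi * I * (n - k : ℕ) / n = -(2 * Real.pi * I * k) / n + 2 * Real.pi * I := by
    push_cast [hk]; field_simp; ring
  rw [← exp_two_pi_I_mul_div, this, exp_add, exp_two_pi_mul_I, mul_one]

lemma Gsum_eq_sum_range {q : ℕ} [NeZero q] (χ : DirichletCharacter ℂ q) :
    Gsum χ = ∑ n ∈ range q, χ n * exp (2 * Real.pi * I / q) ^ n := by
  rw [Gsum]
  refine sum_nbij' ZMod.val (↑) (fun a _ => mem_range.2 a.val_lt)
    (fun _ _ => mem_univ _) (fun a _ => ZMod.natCast_zmod_val a)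
    (fun n hn => ZMod.val_natCast_of_lt (mem_range.1 hn)) fun a _ => ?_
  rw [ZMod.natCast_zmod_val, exp_two_pi_I_mul_div]

lemma Gsum_sixteen_of_apply_five (χ : DirichletCharacter ℂ 16) {c : ℕ} (hc : c = 1 ∨ c = 3)
    (h5 : χ 5 = exp (2 * Real.pi * I * c / 4)) :
    Gsum χ = 4 * χ (-c) * exp (-(2 * Real.pi * I * c) / 16) := by
  set ζ := exp (2 * Real.pi * I / (16 : ℕ))
  have hζ8 : ζ ^ 8 = -1 := by
    rw [← exp_two_pi_I_mul_div, ← exp_pi_mul_I]; push_cast; ring_nf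
  replace h5 : χ 5 = ζ ^ (4 * c) := by
    rw [h5, ← exp_two_pi_I_mul_div]; push_cast; ring_nf
  rw [Gsum_eq_sum_range, χ.sum_range_sixteen, h5, show (16 : ℂ) = (16 : ℕ) by norm_num,
    exp_neg_two_pi_I_mul_div (by norm_num) (by omega)]
  rcases hc with rfl | rfl
  · rw [Nat.cast_one]
    linear_combination (ζ + ζ ^ 17) * hζ8
  · rw [show -((3 : ℕ) : ZMod 16) = 5 ^ 3 by decide, map_pow, h5]
    linear_combination (ζ - ζ ^ 9 + χ (-1) * ζ ^ 15 + 2 * ζ ^ 17 - 2 * ζ ^ 25 +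
      χ (-1) * ζ ^ 31 + 3 * ζ ^ 33 - 3 * ζ ^ 41) * hζ8

theorem stmt12_general (χ : DirichletCharacter ℂ (2 ^ 4))
    -- c odd with χ(5) = e(c/4), 1 ≤ c ≤ 4
    (c : ℕ) (hcrange : 1 ≤ c ∧ c ≤ 4) (hcodd : Odd c)
    (hχ5 : χ ((5 : ℕ) : ZMod (2 ^ 4)) =
      Complex.exp (2 * Real.pi * Complex.I * c / 4)) :
    Gsum χ = 2 ^ 2 * χ (-(c : ZMod (2 ^ 4))) *
      Complex.exp (-(2 * Real.pi * Complex.I * c) / 16) := by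
  have hc : c = 1 ∨ c = 3 := by
    obtain ⟨k, rfl⟩ := hcodd
    omega
  rw [show (2 : ℂ) ^ 2 = 4 by norm_num]
  exact Gsum_sixteen_of_apply_five χ hc hχ5

theorem stmt12 (χ : DirichletCharacter ℂ (2 ^ 4)) (hχ : χ.IsPrimitive)
    -- c odd with χ(5) = e(c/4), 1 ≤ c ≤ 4
    (c : ℕ) (hcrange : 1 ≤ c ∧ c ≤ 4) (hcodd : Odd c)
    (hχ5 : χ ((5 : ℕ) : ZMod (2 ^ 4)) =
      Complex.exp (2 * Real.pi * Complex.I * c / 4)) :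
    Gsum χ = 2 ^ 2 * χ (-(c : ZMod (2 ^ 4))) *
      Complex.exp (-(2 * Real.pi * Complex.I * c) / 16) :=
  stmt12_general χ c hcrange hcodd hχ5
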